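/- Let ε, α, M, δt > 0. Let φ^{n-1}, φ^n, φ^{n+1}, U^n, U^{n+1}, w, ψ^n, ψ^{n+1} be smooth Ω-periodic functions on ℝ^d. Set φ* = (3/2)φ^n - (1/2)φ^{n-1}, φ^{n+1/2} = (φ^{n+1}+φ^n)/2, U^{n+1/2} = (U^{n+1}+U^n)/2, ψ^{n+1/2} = (ψ^{n+1}+ψ^n)/2. Assume the Crank–Nicolson IEQ scheme holds pointwise: (φ^{n+1} - φ^n)/δt = M Δw, w = -ε² Δφ^{n+1/2} + φ* U^{n+1/2} + α ψ^{n+1/2}, U^{n+1} - U^n = 2 φ* (φ^{n+1} - φ^n), and for k = n, n+1: -Δψ^k = φ^k - φ̄^k with ∫_Ω ψ^k dx = 0. Then E(φ^{n+1}, U^{n+1}, ψ^{n+1}) - E(φ^n, U^n, ψ^n) = -δt M ‖∇w‖², where E(φ,U,ψ) = (ε²/2)‖∇φ‖² + (1/4)‖U‖² + (α/2)‖∇ψ‖². -/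

import Mathlib

open MeasureTheory Real Set
open scoped RealInnerProductSpace

noncomputable section
namespace PFBCP

/-- Euclidean space ℝ^d. -/
abbrev Eu (d : ℕ) := EuclideanSpace ℝ (Fin d)

/-- The periodic box Ω = [0, 2π]^d. -/
def Box (d : ℕ) : Set (Eu d) := {x | ∀ i, x i ∈ Icc (0:ℝ) (2 * π)}

/-- i-th coordinate unit vector. -/
def uvec (d : ℕ) (i : Fin d) : Eu d := EuclideanSpace.single i 1

/-- Ω-periodicity: 2π-periodic in each coordinate direction. -/
def OmegaPeriodic {d : ℕ} {F : Type*} [NormedAddCommGroup F] (f : Eu d → F) : Prop :=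
  ∀ (x : Eu d) (i : Fin d), f (x + (2 * π) • uvec d i) = f x

/-- Laplacian (componentwise for vector-valued functions). -/
def lap {d : ℕ} {F : Type*} [NormedAddCommGroup F] [NormedSpace ℝ F]
    (f : Eu d → F) (x : Eu d) : F :=
  ∑ i, fderiv ℝ (fun y => fderiv ℝ f y (uvec d i)) x (uvec d i)

/-- Divergence of a vector field. -/
def dvg {d : ℕ} (u : Eu d → Eu d) (x : Eu d) : ℝ :=
  ∑ i, fderiv ℝ u x (uvec d i) i

/-- (u·∇)v, the directional derivative of `v` along `u`. -/
def conv {d : ℕ} (u v : Eu d → Eu d) (x : Eu d) : Eu d :=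
  fderiv ℝ v x (u x)

/-- Squared Frobenius norm of the gradient of a vector field. -/
def gradVSq {d : ℕ} (u : Eu d → Eu d) (x : Eu d) : ℝ :=
  ∑ i, ∑ j, (fderiv ℝ u x (uvec d i) j) ^ 2

/-- Mean value of a scalar function over the box Ω. -/
def avg {d : ℕ} (f : Eu d → ℝ) : ℝ :=
  (volume (Box d)).toReal⁻¹ * ∫ x in Box d, f x


/-- Discrete energy `E(φ,U,ψ) = (ε²/2)‖∇φ‖² + (1/4)‖U‖² + (α/2)‖∇ψ‖²`. -/
def Edisc {d : ℕ} (ε α : ℝ) (φ U ψ : Eu d → ℝ) : ℝ :=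
  ε ^ 2 / 2 * (∫ x in Box d, ‖gradient φ x‖ ^ 2)
    + 1 / 4 * (∫ x in Box d, (U x) ^ 2)
    + α / 2 * (∫ x in Box d, ‖gradient ψ x‖ ^ 2)

section Aux
variable {d : ℕ}

/-- partial derivative in direction `v`. -/
def pdv (f : Eu d → ℝ) (v : Eu d) : Eu d → ℝ := fun x => fderiv ℝ f x v

lemma contDiff_pdv {f : Eu d → ℝ} (hf : ContDiff ℝ (⊤ : ℕ∞) f) (v : Eu d) :
    ContDiff ℝ (⊤ : ℕ∞) (pdv f v) :=
  (ContinuousLinearMap.apply ℝ ℝ v).contDiff.comp (hf.fderiv_right (m := (⊤ : ℕ∞)) (by simp))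

lemma fderiv_translate {f : Eu d → ℝ} (hf : ContDiff ℝ (⊤ : ℕ∞) f) {c : Eu d}
    (hfc : ∀ y, f (y + c) = f y) (x : Eu d) :
    fderiv ℝ f (x + c) = fderiv ℝ f x := by
  have h := ((hf.differentiable (by simp)) (x + c)).hasFDerivAt
  have htr : HasFDerivAt (fun y : Eu d => y + c)
      (ContinuousLinearMap.id ℝ (Eu d)) x := (hasFDerivAt_id x).add_const c
  have h2 := h.comp x htr
  rw [ContinuousLinearMap.comp_id] at h2
  have h3 : HasFDerivAt f (fderiv ℝ f (x + c)) x := by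
    rwa [show (f ∘ fun y : Eu d => y + c) = f from funext hfc] at h2
  exact h3.fderiv.symm

lemma periodic_pdv {f : Eu d → ℝ} (hf : ContDiff ℝ (⊤ : ℕ∞) f) (hfp : OmegaPeriodic f) (v : Eu d) :
    OmegaPeriodic (pdv f v) := by
  intro x i
  have := fderiv_translate hf (c := (2 * π) • uvec d i) (fun y => hfp y i) x
  simp only [pdv, this]

lemma lap_eq_sum_pdv (f : Eu d → ℝ) (x : Eu d) :
    lap f x = ∑ i, pdv (pdv f (uvec d i)) (uvec d i) x := rfl

lemma continuous_lap {f : Eu d → ℝ} (hf : ContDiff ℝ (⊤ : ℕ∞) f) : Continuous (lap f) := by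
  have : Continuous fun x => ∑ i, pdv (pdv f (uvec d i)) (uvec d i) x :=
    continuous_finset_sum _ fun i _ =>
      (contDiff_pdv (contDiff_pdv hf _) _).continuous
  exact this

lemma gradient_apply {f : Eu d → ℝ} (x : Eu d) (i : Fin d) :
    gradient f x i = pdv f (uvec d i) x := by
  have h1 : ⟪gradient f x, uvec d i⟫ = fderiv ℝ f x (uvec d i) := by
    simp [gradient, InnerProductSpace.toDual_symm_apply]
  have h2 : ⟪gradient f x, uvec d i⟫ = gradient f x i := by
    rw [uvec, EuclideanSpace.inner_single_right]; simp
  rw [pdv, ← h1, h2]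

lemma norm_gradient_sq {f : Eu d → ℝ} (x : Eu d) :
    ‖gradient f x‖ ^ 2 = ∑ i, (pdv f (uvec d i) x) ^ 2 := by
  rw [← real_inner_self_eq_norm_sq]
  rw [PiLp.inner_apply]
  refine Finset.sum_congr rfl fun i _ => ?_
  rw [gradient_apply]
  simp [sq]

lemma continuous_norm_gradient_sq {f : Eu d → ℝ} (hf : ContDiff ℝ (⊤ : ℕ∞) f) :
    Continuous fun x => ‖gradient f x‖ ^ 2 := by
  have : Continuous fun x => ∑ i, (pdv f (uvec d i) x) ^ 2 :=
    continuous_finset_sum _ fun i _ => ((contDiff_pdv hf _).continuous).pow 2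
  convert this using 1
  funext x; exact norm_gradient_sq x

-- box facts
lemma box_preimage (d : ℕ) :
    Box d = ((MeasurableEquiv.toLp 2 (Fin d → ℝ)).symm) ⁻¹' (Icc (0 : Fin d → ℝ) (fun _ => 2*π)) := by
  ext x
  simp only [Box, mem_setOf_eq, mem_preimage, mem_Icc, Pi.le_def]
  exact ⟨fun h => ⟨fun i => (h i).1, fun i => (h i).2⟩, fun h i => ⟨h.1 i, h.2 i⟩⟩

lemma isCompact_box (d : ℕ) : IsCompact (Box d) := by
  rw [box_preimage]
  change IsCompact ((EuclideanSpace.equiv (Fin d) ℝ).toHomeomorph ⁻¹' _)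
  exact (EuclideanSpace.equiv (Fin d) ℝ).toHomeomorph.isCompact_preimage.mpr isCompact_Icc

lemma integrableOn_box {f : Eu d → ℝ} (hf : Continuous f) : IntegrableOn f (Box d) volume :=
  hf.continuousOn.integrableOn_compact (isCompact_box d)

lemma insertNth_add_single {n : ℕ} (i : Fin (n+1)) (x : Fin n → ℝ) (c t : ℝ) :
    Fin.insertNth (α := fun _ => ℝ) i c x + t • (Pi.single i 1 : Fin (n+1) → ℝ)
      = Fin.insertNth (α := fun _ => ℝ) i (c + t) x := by
  funext j
  refine Fin.succAboveCases i ?_ ?_ j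
  · simp
  · intro k
    simp [Fin.insertNth_apply_succAbove, Pi.single_eq_of_ne (Fin.succAbove_ne i k)]

lemma continuous_dvg (V : Eu d → Eu d) (hV : ContDiff ℝ (⊤ : ℕ∞) V) :
    Continuous (dvg V) := by
  refine continuous_finset_sum _ fun i _ => ?_
  exact (EuclideanSpace.proj (𝕜 := ℝ) i).continuous.comp
    ((ContinuousLinearMap.apply ℝ (Eu d) (uvec d i)).continuous.comp
      (hV.fderiv_right (m := (⊤ : ℕ∞)) (by simp)).continuous)

lemma integral_dvg_eq_zero (hd : 0 < d) (V : Eu d → Eu d)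
    (hV : ContDiff ℝ (⊤ : ℕ∞) V) (hVp : OmegaPeriodic V) :
    ∫ x in Box d, dvg V x = 0 := by
  obtain ⟨n, rfl⟩ := Nat.exists_eq_succ_of_ne_zero hd.ne'
  set e := EuclideanSpace.equiv (Fin (n+1)) ℝ with he
  set F : (Fin (n+1) → ℝ) → (Fin (n+1) → ℝ) := fun y => e (V (e.symm y)) with hF
  set F' : (Fin (n+1) → ℝ) → (Fin (n+1) → ℝ) →L[ℝ] (Fin (n+1) → ℝ) := fun y =>
    ((e.toContinuousLinearMap.comp (fderiv ℝ V (e.symm y))).comp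
      e.symm.toContinuousLinearMap) with hF'
  have hder : ∀ y, HasFDerivAt F (F' y) y := by
    intro y
    have h1 : HasFDerivAt V (fderiv ℝ V (e.symm y)) (e.symm y) :=
      ((hV.differentiable (by simp)) (e.symm y)).hasFDerivAt
    exact (e.toContinuousLinearMap.hasFDerivAt.comp (e.symm y) h1).comp y
      e.symm.toContinuousLinearMap.hasFDerivAt
  have hdvg : ∀ y, (∑ i, F' y (Pi.single i 1) i) = dvg V (e.symm y) := fun y => rfl
  have key := integral_divergence_of_hasFDerivAt_off_countable
    (a := (0 : Fin (n+1) → ℝ)) (b := fun _ => 2*π)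
    (fun i => by positivity : (0 : Fin (n+1) → ℝ) ≤ fun _ => 2*π)
    F F' ∅ countable_empty
    (Continuous.continuousOn
      (e.continuous.comp (hV.continuous.comp e.symm.continuous)))
    (fun x _ => hder x)
    (by
      rw [show (fun x => ∑ i, F' x (Pi.single i 1) i) = fun y => dvg V (e.symm y) from
        funext hdvg]
      exact (((continuous_dvg V hV).comp e.symm.continuous).continuousOn).integrableOn_compact
        isCompact_Icc)
  have hbdry : ∀ i : Fin (n+1), ∀ x : Fin n → ℝ,
      F (Fin.insertNth i ((fun _ => 2*π : Fin (n+1) → ℝ) i) x) i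
        = F (Fin.insertNth i ((0 : Fin (n+1) → ℝ) i) x) i := by
    intro i x
    have h1 : (Fin.insertNth i ((fun _ => 2*π : Fin (n+1) → ℝ) i) x : Fin (n+1) → ℝ)
        = Fin.insertNth (α := fun _ => ℝ) i ((0 : Fin (n+1) → ℝ) i) x
            + (2*π) • (Pi.single i 1 : Fin (n+1) → ℝ) := by
      rw [insertNth_add_single]; simp
    rw [h1]
    show (V (e.symm _) : Fin (n+1) → ℝ) i = (V (e.symm _)) i
    have h2 : e.symm (Fin.insertNth (α := fun _ => ℝ) i ((0 : Fin (n+1) → ℝ) i) x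
          + (2*π) • (Pi.single i 1 : Fin (n+1) → ℝ))
        = e.symm (Fin.insertNth (α := fun _ => ℝ) i ((0 : Fin (n+1) → ℝ) i) x)
            + (2*π) • uvec (n+1) i := rfl
    rw [h2, hVp]
  rw [box_preimage]
  have hmp := EuclideanSpace.volume_preserving_symm_measurableEquiv_toLp (Fin (n+1))
  have hemb := ((MeasurableEquiv.toLp 2 (Fin (n+1) → ℝ)).symm).measurableEmbedding
  have htrans := hmp.setIntegral_preimage_emb hemb
    (fun y => dvg V (e.symm y)) (Icc (0 : Fin (n+1) → ℝ) (fun _ => 2*π))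
  have hid : ∀ x : Eu (n+1),
      dvg V (e.symm ((MeasurableEquiv.toLp 2 (Fin (n+1) → ℝ)).symm x)) = dvg V x := fun x => rfl
  calc ∫ x in ((MeasurableEquiv.toLp 2 (Fin (n+1) → ℝ)).symm) ⁻¹'
        (Icc (0:Fin (n+1)→ℝ) (fun _ => 2*π)), dvg V x
      = ∫ y in Icc (0:Fin (n+1)→ℝ) (fun _ => 2*π), dvg V (e.symm y) := by
        rw [← htrans]
        exact setIntegral_congr_fun
          (measurableSet_Icc.preimage ((MeasurableEquiv.toLp 2 (Fin (n+1) → ℝ)).symm).measurable)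
          (fun x _ => (hid x).symm)
    _ = ∫ y in Icc (0:Fin (n+1)→ℝ) (fun _ => 2*π), ∑ i, F' y (Pi.single i 1) i :=
        setIntegral_congr_fun measurableSet_Icc (fun y _ => (hdvg y).symm)
    _ = 0 := by
        rw [key]
        refine Finset.sum_eq_zero fun i _ => ?_
        rw [sub_eq_zero]
        exact setIntegral_congr_fun measurableSet_Icc (fun x _ => hbdry i x)

-- ### integration by parts
/-- ∫ f Δg = -∫ ∇f·∇g for smooth periodic f, g. -/
lemma integral_mul_lap (hd : 0 < d) (f g : Eu d → ℝ)
    (hf : ContDiff ℝ (⊤ : ℕ∞) f) (hg : ContDiff ℝ (⊤ : ℕ∞) g)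
    (hfp : OmegaPeriodic f) (hgp : OmegaPeriodic g) :
    ∫ x in Box d, f x * lap g x
      = -∫ x in Box d, ∑ i, pdv f (uvec d i) x * pdv g (uvec d i) x := by
  set V : Eu d → Eu d := fun x =>
    (WithLp.equiv 2 (Fin d → ℝ)).symm (fun i => f x * pdv g (uvec d i) x) with hV
  have hVc : ContDiff ℝ (⊤ : ℕ∞) V := by
    refine contDiff_euclidean.mpr fun i => ?_
    exact hf.mul (contDiff_pdv hg _)
  have hVp : OmegaPeriodic V := by
    intro x i
    simp only [hV]
    congr 1
    funext j
    rw [hfp x i, periodic_pdv hg hgp (uvec d j) x i]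
  have hdvg : ∀ x, dvg V x
      = (∑ i, pdv f (uvec d i) x * pdv g (uvec d i) x) + f x * lap g x := by
    intro x
    have hcomp : ∀ i : Fin d, ∀ v : Eu d, fderiv ℝ V x v i
        = fderiv ℝ (fun y => f y * pdv g (uvec d i) y) x v := by
      intro i v
      have hVd : DifferentiableAt ℝ V x := (hVc.differentiable (by simp)) x
      have hproj := (EuclideanSpace.proj (𝕜 := ℝ) i).hasFDerivAt.comp x hVd.hasFDerivAt
      have heq : (⇑(EuclideanSpace.proj (𝕜 := ℝ) i) ∘ V) = fun y => f y * pdv g (uvec d i) y :=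
        funext fun y => rfl
      rw [heq] at hproj
      rw [hproj.fderiv]
      rfl
    have hmul : ∀ i : Fin d, fderiv ℝ (fun y => f y * pdv g (uvec d i) y) x (uvec d i)
        = pdv f (uvec d i) x * pdv g (uvec d i) x
          + f x * pdv (pdv g (uvec d i)) (uvec d i) x := by
      intro i
      rw [fderiv_fun_mul ((hf.differentiable (by simp)) x)
        (((contDiff_pdv hg (uvec d i)).differentiable (by simp)) x)]
      simp only [ContinuousLinearMap.add_apply, ContinuousLinearMap.smul_apply,
        ContinuousLinearMap.smul_apply, smul_eq_mul]
      ring_nf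
      rfl
    calc dvg V x = ∑ i, fderiv ℝ (fun y => f y * pdv g (uvec d i) y) x (uvec d i) := by
          refine Finset.sum_congr rfl fun i _ => hcomp i (uvec d i)
      _ = ∑ i, (pdv f (uvec d i) x * pdv g (uvec d i) x
            + f x * pdv (pdv g (uvec d i)) (uvec d i) x) :=
          Finset.sum_congr rfl fun i _ => hmul i
      _ = (∑ i, pdv f (uvec d i) x * pdv g (uvec d i) x) + f x * lap g x := by
          rw [Finset.sum_add_distrib, ← Finset.mul_sum, lap_eq_sum_pdv]
  have hzero := integral_dvg_eq_zero hd V hVc hVp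
  have hint1 : IntegrableOn (fun x => ∑ i, pdv f (uvec d i) x * pdv g (uvec d i) x)
      (Box d) volume := by
    refine integrableOn_box (continuous_finset_sum _ fun i _ => ?_)
    exact ((contDiff_pdv hf _).continuous).mul ((contDiff_pdv hg _).continuous)
  have hint2 : IntegrableOn (fun x => f x * lap g x) (Box d) volume :=
    integrableOn_box (hf.continuous.mul (continuous_lap hg))
  have hsplit : ∫ x in Box d, dvg V x
      = (∫ x in Box d, ∑ i, pdv f (uvec d i) x * pdv g (uvec d i) x)
        + ∫ x in Box d, f x * lap g x := by
    rw [show (dvg V) = fun x => (∑ i, pdv f (uvec d i) x * pdv g (uvec d i) x)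
        + f x * lap g x from funext hdvg]
    exact integral_add hint1 hint2
  rw [hzero] at hsplit
  linarith

section Aux2
variable {d : ℕ}

lemma pdv_sub {f g : Eu d → ℝ} (hf : ContDiff ℝ (⊤ : ℕ∞) f) (hg : ContDiff ℝ (⊤ : ℕ∞) g) (v x) :
    pdv (fun y => f y - g y) v x = pdv f v x - pdv g v x := by
  simp only [pdv, fderiv_fun_sub ((hf.differentiable (by simp)) x) ((hg.differentiable (by simp)) x),
    ContinuousLinearMap.sub_apply]

lemma pdv_half {f g : Eu d → ℝ} (hf : ContDiff ℝ (⊤ : ℕ∞) f) (hg : ContDiff ℝ (⊤ : ℕ∞) g) (v x) :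
    pdv (fun y => (f y + g y) / 2) v x = (pdv f v x + pdv g v x) / 2 := by
  have h : (fun y => (f y + g y) / 2) = fun y => (2⁻¹ : ℝ) * (f y + g y) :=
    funext fun y => by ring
  have hfd := (hf.differentiable (by simp)) x
  have hgd := (hg.differentiable (by simp)) x
  simp only [pdv]
  rw [h]
  simp only [fderiv_const_mul (hfd.fun_add hgd), fderiv_fun_add hfd hgd,
    ContinuousLinearMap.smul_apply, ContinuousLinearMap.add_apply, smul_eq_mul]
  ring

lemma lap_sub {f g : Eu d → ℝ} (hf : ContDiff ℝ (⊤ : ℕ∞) f) (hg : ContDiff ℝ (⊤ : ℕ∞) g) (x : Eu d) :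
    lap (fun y => f y - g y) x = lap f x - lap g x := by
  simp only [lap_eq_sum_pdv]
  rw [← Finset.sum_sub_distrib]
  refine Finset.sum_congr rfl fun i _ => ?_
  have h1 : pdv (fun y => f y - g y) (uvec d i) = fun y => pdv f (uvec d i) y - pdv g (uvec d i) y :=
    funext fun y => pdv_sub hf hg _ y
  rw [h1]
  exact pdv_sub (contDiff_pdv hf _) (contDiff_pdv hg _) _ x

lemma lap_half {f g : Eu d → ℝ} (hf : ContDiff ℝ (⊤ : ℕ∞) f) (hg : ContDiff ℝ (⊤ : ℕ∞) g) (x : Eu d) :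
    lap (fun y => (f y + g y) / 2) x = (lap f x + lap g x) / 2 := by
  simp only [lap_eq_sum_pdv]
  rw [← Finset.sum_add_distrib, Finset.sum_div]
  refine Finset.sum_congr rfl fun i _ => ?_
  have h1 : pdv (fun y => (f y + g y) / 2) (uvec d i)
      = fun y => (pdv f (uvec d i) y + pdv g (uvec d i) y) / 2 :=
    funext fun y => pdv_half hf hg _ y
  rw [h1]
  exact pdv_half (contDiff_pdv hf _) (contDiff_pdv hg _) _ x

end Aux2

end Aux

lemma measurableSet_box (d : ℕ) : MeasurableSet (Box d) := by
  rw [box_preimage]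
  exact measurableSet_Icc.preimage ((MeasurableEquiv.toLp 2 (Fin d → ℝ)).symm).measurable

/-- Discrete energy dissipation law (3.17) of Theorem 3.1 for Scheme 1. -/
theorem scheme1_energy_law {d : ℕ} (hd : d = 2 ∨ d = 3)
    (ε α M δt : ℝ) (hε : 0 < ε) (hα : 0 < α) (hM : 0 < M) (hδt : 0 < δt)
    (φm φ0 φ1 U0 U1 w ψ0 ψ1 : Eu d → ℝ)
    (hφms : ContDiff ℝ (⊤ : ℕ∞) φm) (hφ0s : ContDiff ℝ (⊤ : ℕ∞) φ0) (hφ1s : ContDiff ℝ (⊤ : ℕ∞) φ1)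
    (hU0s : ContDiff ℝ (⊤ : ℕ∞) U0) (hU1s : ContDiff ℝ (⊤ : ℕ∞) U1) (hws : ContDiff ℝ (⊤ : ℕ∞) w)
    (hψ0s : ContDiff ℝ (⊤ : ℕ∞) ψ0) (hψ1s : ContDiff ℝ (⊤ : ℕ∞) ψ1)
    (hφmp : OmegaPeriodic φm) (hφ0p : OmegaPeriodic φ0) (hφ1p : OmegaPeriodic φ1)
    (hU0p : OmegaPeriodic U0) (hU1p : OmegaPeriodic U1) (hwp : OmegaPeriodic w)
    (hψ0p : OmegaPeriodic ψ0) (hψ1p : OmegaPeriodic ψ1)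
    (heq1 : ∀ x : Eu d, (φ1 x - φ0 x) / δt = M * lap w x)
    (heq2 : ∀ x : Eu d,
      w x = -ε ^ 2 * lap (fun y => (φ1 y + φ0 y) / 2) x
        + (3 / 2 * φ0 x - 1 / 2 * φm x) * ((U1 x + U0 x) / 2)
        + α * ((ψ1 x + ψ0 x) / 2))
    (heq3 : ∀ x : Eu d,
      U1 x - U0 x = 2 * (3 / 2 * φ0 x - 1 / 2 * φm x) * (φ1 x - φ0 x))
    (hψeq0 : ∀ x : Eu d, -lap ψ0 x = φ0 x - avg φ0)
    (hψeq1 : ∀ x : Eu d, -lap ψ1 x = φ1 x - avg φ1)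
    (hψmean0 : (∫ x in Box d, ψ0 x) = 0)
    (hψmean1 : (∫ x in Box d, ψ1 x) = 0) :
    Edisc ε α φ1 U1 ψ1 - Edisc ε α φ0 U0 ψ0
      = -(δt * M * ∫ x in Box d, ‖gradient w x‖ ^ 2) := by
  have hd1 : 0 < d := by rcases hd with h | h <;> omega
  -- smoothness and periodicity of combinations
  have hfds : ContDiff ℝ (⊤ : ℕ∞) (fun y => φ1 y - φ0 y) := hφ1s.sub hφ0s
  have hfdp : OmegaPeriodic (fun y => φ1 y - φ0 y) := fun x i => by
    simp only [hφ1p x i, hφ0p x i]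
  have hφhs : ContDiff ℝ (⊤ : ℕ∞) (fun y => (φ1 y + φ0 y) / 2) := (hφ1s.add hφ0s).div_const 2
  have hφhp : OmegaPeriodic (fun y => (φ1 y + φ0 y) / 2) := fun x i => by
    simp only [hφ1p x i, hφ0p x i]
  have hψhs : ContDiff ℝ (⊤ : ℕ∞) (fun y => (ψ1 y + ψ0 y) / 2) := (hψ1s.add hψ0s).div_const 2
  have hψhp : OmegaPeriodic (fun y => (ψ1 y + ψ0 y) / 2) := fun x i => by
    simp only [hψ1p x i, hψ0p x i]
  have hηs : ContDiff ℝ (⊤ : ℕ∞) (fun y => ψ0 y - ψ1 y) := hψ0s.sub hψ1s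
  have hηp : OmegaPeriodic (fun y => ψ0 y - ψ1 y) := fun x i => by
    simp only [hψ1p x i, hψ0p x i]
  -- Step 1: ∫ (φ1-φ0) w = -(δt M ∫ |∇w|²)
  have hS1 : ∀ x, (φ1 x - φ0 x) * w x = (δt * M) * (w x * lap w x) := by
    intro x
    have h := heq1 x
    rw [div_eq_iff hδt.ne'] at h
    linear_combination w x * h
  have hwlap := integral_mul_lap hd1 w w hws hws hwp hwp
  have hwnorm : ∫ x in Box d, ∑ i, pdv w (uvec d i) x * pdv w (uvec d i) x
      = ∫ x in Box d, ‖gradient w x‖ ^ 2 := by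
    refine setIntegral_congr_fun (measurableSet_box d) fun x _ => ?_
    rw [norm_gradient_sq]
    exact Finset.sum_congr rfl fun i _ => (sq _).symm
  have hS2 : ∫ x in Box d, (φ1 x - φ0 x) * w x
      = -(δt * M * ∫ x in Box d, ‖gradient w x‖ ^ 2) := by
    calc ∫ x in Box d, (φ1 x - φ0 x) * w x
        = ∫ x in Box d, (δt * M) * (w x * lap w x) :=
          setIntegral_congr_fun (measurableSet_box d) fun x _ => hS1 x
      _ = (δt * M) * ∫ x in Box d, w x * lap w x := integral_const_mul _ _
      _ = -(δt * M * ∫ x in Box d, ‖gradient w x‖ ^ 2) := by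
          rw [hwlap, hwnorm]; ring
  -- Step 2: pointwise splitting of (φ1-φ0) w via heq2, heq3
  have hS3 : ∀ x, (φ1 x - φ0 x) * w x
      = (-ε ^ 2) * ((φ1 x - φ0 x) * lap (fun y => (φ1 y + φ0 y) / 2) x)
        + ((1/4) * ((U1 x) ^ 2 - (U0 x) ^ 2)
          + α * ((φ1 x - φ0 x) * ((ψ1 x + ψ0 x) / 2))) := by
    intro x
    linear_combination (φ1 x - φ0 x) * heq2 x - ((U1 x + U0 x) / 4) * heq3 x
  -- integrability facts
  have hIa : IntegrableOn (fun x => (φ1 x - φ0 x) * lap (fun y => (φ1 y + φ0 y) / 2) x)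
      (Box d) volume :=
    integrableOn_box ((hφ1s.continuous.sub hφ0s.continuous).mul (continuous_lap hφhs))
  have hIU1 : IntegrableOn (fun x => (U1 x) ^ 2) (Box d) volume :=
    integrableOn_box (hU1s.continuous.pow 2)
  have hIU0 : IntegrableOn (fun x => (U0 x) ^ 2) (Box d) volume :=
    integrableOn_box (hU0s.continuous.pow 2)
  have hIc : IntegrableOn (fun x => (φ1 x - φ0 x) * ((ψ1 x + ψ0 x) / 2)) (Box d) volume :=
    integrableOn_box ((hφ1s.continuous.sub hφ0s.continuous).mul
      ((hψ1s.continuous.add hψ0s.continuous).div_const 2))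
  have hIsub : IntegrableOn (fun x => (U1 x) ^ 2 - (U0 x) ^ 2) (Box d) volume := hIU1.sub hIU0
  have hI1 : IntegrableOn (fun x => (-ε ^ 2) * ((φ1 x - φ0 x)
      * lap (fun y => (φ1 y + φ0 y) / 2) x)) (Box d) volume := hIa.const_mul _
  have hI2 : IntegrableOn (fun x => (1/4 : ℝ) * ((U1 x) ^ 2 - (U0 x) ^ 2)) (Box d) volume :=
    hIsub.const_mul _
  have hI3 : IntegrableOn (fun x => α * ((φ1 x - φ0 x) * ((ψ1 x + ψ0 x) / 2)))
      (Box d) volume := hIc.const_mul _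
  have hI23 : IntegrableOn (fun x => (1/4 : ℝ) * ((U1 x) ^ 2 - (U0 x) ^ 2)
      + α * ((φ1 x - φ0 x) * ((ψ1 x + ψ0 x) / 2))) (Box d) volume := hI2.add hI3
  have hsplit : ∫ x in Box d, (φ1 x - φ0 x) * w x
      = (-ε ^ 2) * (∫ x in Box d, (φ1 x - φ0 x) * lap (fun y => (φ1 y + φ0 y) / 2) x)
        + ((1/4) * ((∫ x in Box d, (U1 x) ^ 2) - ∫ x in Box d, (U0 x) ^ 2)
          + α * ∫ x in Box d, (φ1 x - φ0 x) * ((ψ1 x + ψ0 x) / 2)) := by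
    rw [setIntegral_congr_fun (measurableSet_box d) fun x _ => hS3 x]
    rw [integral_add hI1 hI23, integral_add hI2 hI3]
    rw [integral_const_mul, integral_const_mul, integral_const_mul, integral_sub hIU1 hIU0]
  -- Step 3: evaluate the ε² term
  have hT1 : ∫ x in Box d, (φ1 x - φ0 x) * lap (fun y => (φ1 y + φ0 y) / 2) x
      = -(((∫ x in Box d, ‖gradient φ1 x‖ ^ 2) - ∫ x in Box d, ‖gradient φ0 x‖ ^ 2) / 2) := by
    have h := integral_mul_lap hd1 (fun y => φ1 y - φ0 y) (fun y => (φ1 y + φ0 y) / 2)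
      hfds hφhs hfdp hφhp
    beta_reduce at h
    rw [h]
    have hpt : ∀ x, (∑ i, pdv (fun y => φ1 y - φ0 y) (uvec d i) x
        * pdv (fun y => (φ1 y + φ0 y) / 2) (uvec d i) x)
        = ((‖gradient φ1 x‖ ^ 2) - ‖gradient φ0 x‖ ^ 2) / 2 := by
      intro x
      rw [norm_gradient_sq, norm_gradient_sq, ← Finset.sum_sub_distrib, Finset.sum_div]
      refine Finset.sum_congr rfl fun i _ => ?_
      rw [pdv_sub hφ1s hφ0s, pdv_half hφ1s hφ0s]
      ring
    rw [setIntegral_congr_fun (measurableSet_box d) fun x _ => hpt x]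
    rw [integral_div, integral_sub (integrableOn_box (continuous_norm_gradient_sq hφ1s))
      (integrableOn_box (continuous_norm_gradient_sq hφ0s))]
  -- Step 4: evaluate the α term
  have hfd_eq : ∀ x, φ1 x - φ0 x
      = lap (fun y => ψ0 y - ψ1 y) x + (avg φ1 - avg φ0) := by
    intro x
    rw [lap_sub hψ0s hψ1s]
    have h0 := hψeq0 x
    have h1 := hψeq1 x
    linarith
  have hψhmean : (∫ x in Box d, (ψ1 x + ψ0 x) / 2) = 0 := by
    rw [integral_div, integral_add (integrableOn_box hψ1s.continuous)
      (integrableOn_box hψ0s.continuous), hψmean0, hψmean1]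
    norm_num
  have hIlapη : IntegrableOn (fun x => ((ψ1 x + ψ0 x) / 2) * lap (fun y => ψ0 y - ψ1 y) x)
      (Box d) volume :=
    integrableOn_box (((hψ1s.continuous.add hψ0s.continuous).div_const 2).mul
      (continuous_lap hηs))
  have hIψh : IntegrableOn (fun x => (ψ1 x + ψ0 x) / 2) (Box d) volume :=
    integrableOn_box ((hψ1s.continuous.add hψ0s.continuous).div_const 2)
  have hT3 : ∫ x in Box d, (φ1 x - φ0 x) * ((ψ1 x + ψ0 x) / 2)
      = ((∫ x in Box d, ‖gradient ψ1 x‖ ^ 2) - ∫ x in Box d, ‖gradient ψ0 x‖ ^ 2) / 2 := by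
    have hstep1 : ∫ x in Box d, (φ1 x - φ0 x) * ((ψ1 x + ψ0 x) / 2)
        = (∫ x in Box d, ((ψ1 x + ψ0 x) / 2) * lap (fun y => ψ0 y - ψ1 y) x)
          + (avg φ1 - avg φ0) * ∫ x in Box d, (ψ1 x + ψ0 x) / 2 := by
      rw [← integral_const_mul, ← integral_add hIlapη (hIψh.const_mul _)]
      refine setIntegral_congr_fun (measurableSet_box d) fun x _ => ?_
      rw [hfd_eq x]
      ring
    rw [hstep1, hψhmean, mul_zero, add_zero]
    have h := integral_mul_lap hd1 (fun y => (ψ1 y + ψ0 y) / 2) (fun y => ψ0 y - ψ1 y)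
      hψhs hηs hψhp hηp
    beta_reduce at h
    rw [h]
    have hpt : ∀ x, (∑ i, pdv (fun y => (ψ1 y + ψ0 y) / 2) (uvec d i) x
        * pdv (fun y => ψ0 y - ψ1 y) (uvec d i) x)
        = ((‖gradient ψ0 x‖ ^ 2) - ‖gradient ψ1 x‖ ^ 2) / 2 := by
      intro x
      rw [norm_gradient_sq, norm_gradient_sq, ← Finset.sum_sub_distrib, Finset.sum_div]
      refine Finset.sum_congr rfl fun i _ => ?_
      rw [pdv_sub hψ0s hψ1s, pdv_half hψ1s hψ0s]
      ring
    rw [setIntegral_congr_fun (measurableSet_box d) fun x _ => hpt x]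
    rw [integral_div, integral_sub (integrableOn_box (continuous_norm_gradient_sq hψ0s))
      (integrableOn_box (continuous_norm_gradient_sq hψ1s))]
    ring
  -- conclude
  rw [hT1, hT3] at hsplit
  rw [hS2] at hsplit
  simp only [Edisc]
  linear_combination -hsplit

end PFBCP
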